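/- Suppose e : Option γ → Option δ is null-preserving, i.e., e none = none. Then for any finite multisets A and B and constantly-false join condition, the query that projects e applied to the B-side of (A LEFT JOIN B ON FALSE) and then filters by 'result IS NOT NULL' returns the empty multiset. -/
import Mathlib


attribute [local instance] Multiset.decidableExistsMultiset

inductive TV | True3 | False3 | Unknown3
deriving DecidableEq

open TV

def leftJoin {α β : Type*} (L : Multiset α) (R : Multiset β) (c : α → β → TV) :
    Multiset (α × Option β) :=
  L.bind fun l =>
    if ∃ r ∈ R, c l r = True3 then
      (R.filter (fun r => c l r = True3)).map (fun r => (l, some r))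
    else {(l, none)}

theorem null_preserving_left_join_false_filter_empty {α γ δ : Type*}
    (e : Option γ → Option δ) (he : e none = none)
    (A : Multiset α) (B : Multiset γ) :
    ((leftJoin A B (fun _ _ => False3)).map (fun q => e q.2)).filter
      (fun x => x.isSome = true) = 0 := by
  rw [Multiset.filter_eq_nil]
  intro x hx
  simp only [leftJoin, Multiset.mem_map, Multiset.mem_bind] at hx
  obtain ⟨q, ⟨a, _, hq⟩, rfl⟩ := hx
  rw [if_neg (by simp)] at hq
  simp only [Multiset.mem_singleton] at hq
  subst hq
  simp [he]
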